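/- arXiv:1810.04443 — 3 statements merged into one kernel-verified Lean document; each statement's English description precedes it below -/
import Mathlib

section
/- Let θ₀ ∈ ℝ, b ≠ 0, σ > 0, H ≥ 1, and let v₀, v₁, …, v_H be independent real random variables on a probability space (Ω, F, μ), each with Gaussian law N(0, σ²). Define θ̂(ω) = θ₀ + b⁻¹·(v₀(ω) - (1/H) Σ_{h=1}^H v_h(ω)). Then the law of ω ↦ (1 + 1/H)^{-1/2} · σ⁻¹ · b · (θ̂(ω) - θ₀) is the standard Gaussian N(0,1). (Exact one-dimensional instance of Theorem 3 / Proposition 4: for an auxiliary estimator with affine expectation bθ + const and Gaussian parameter-free noise, the normalized just-identified indirect-inference estimator is exactly standard normal.) -/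
/-!
Writing `v₀, …, v_H` for the noise, `b (θ̂ - θ₀) = v₀ - (1/H) ∑_{h ≥ 1} v_h` is a linear
combination of independent centred Gaussians, hence centred Gaussian with variance
`σ² (1 + H · H⁻²) = σ² (1 + 1/H)`; the normalisation divides exactly this variance out.
-/

open MeasureTheory ProbabilityTheory
open scoped NNReal
open Fin.NatCast

lemma aemeasurable_of_map_eq_gaussianReal {Ω : Type*} [MeasurableSpace Ω] {μ : Measure Ω}
    {Y : Ω → ℝ} {m : ℝ} {w : ℝ≥0} (h : μ.map Y = gaussianReal m w) : AEMeasurable Y μ :=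
  AEMeasurable.of_map_ne_zero (by rw [h]; exact IsProbabilityMeasure.ne_zero _)

namespace ProbabilityTheory.iIndepFun

variable {Ω ι : Type*} [MeasurableSpace Ω] {μ : Measure Ω} [IsProbabilityMeasure μ]
  {X : ι → Ω → ℝ} {m : ι → ℝ} {w : ι → ℝ≥0}

lemma map_sum_eq_gaussianReal (hX : iIndepFun X μ)
    (hlaw : ∀ i, μ.map (X i) = gaussianReal (m i) (w i)) (s : Finset ι) :
    μ.map (fun ω => ∑ i ∈ s, X i ω) = gaussianReal (∑ i ∈ s, m i) (∑ i ∈ s, w i) := by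
  classical
  induction s using Finset.induction_on with
  | empty => simp [gaussianReal_zero_var]
  | insert i s hi ih =>
    have hindep : IndepFun (fun ω => ∑ j ∈ s, X j ω) (X i) μ := by
      simpa only [Finset.sum_fn] using
        hX.indepFun_finsetSum_of_notMem₀ (fun j => aemeasurable_of_map_eq_gaussianReal (hlaw j)) hi
    simp_rw [Finset.sum_insert hi, add_comm (X i _), add_comm (m i), add_comm (w i)]
    exact gaussianReal_add_gaussianReal_of_indepFun hindep ih (hlaw i)

lemma map_sum_mul_eq_gaussianReal (hX : iIndepFun X μ)
    (hlaw : ∀ i, μ.map (X i) = gaussianReal (m i) (w i)) (a : ι → ℝ) (s : Finset ι) :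
    μ.map (fun ω => ∑ i ∈ s, a i * X i ω) =
      gaussianReal (∑ i ∈ s, a i * m i) (∑ i ∈ s, ‖a i‖₊ ^ 2 * w i) := by
  have hmeas i := aemeasurable_of_map_eq_gaussianReal (hlaw i)
  refine (hX.comp₀ (fun i x => a i * x) hmeas fun i => by fun_prop).map_sum_eq_gaussianReal
    (fun i => ?_) s
  rw [← AEMeasurable.map_map_of_aemeasurable (by fun_prop) (hmeas i), hlaw i,
    gaussianReal_map_const_mul]
  congr 1
  ext
  simp

end ProbabilityTheory.iIndepFun

lemma Fin.sum_Icc_one_natCast_eq_sum_succ {M : Type*} [AddCommMonoid M] (H : ℕ)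
    (f : Fin (H + 1) → M) : ∑ h ∈ Finset.Icc 1 H, f h = ∑ i : Fin H, f i.succ := by
  have hsucc (i : Fin H) : i.succ = ((i + 1 : ℕ) : Fin (H + 1)) := by
    ext
    simp
  simp_rw [hsucc, Fin.sum_univ_eq_sum_range (fun i => f (i + 1 : ℕ)), Finset.range_eq_Ico,
    Finset.sum_Ico_add' (fun i : ℕ => f i)]
  rfl

theorem jie_exact_normal_1d_general {Ω : Type*} [MeasurableSpace Ω]
    (μ : Measure Ω) [IsProbabilityMeasure μ]
    (θ₀ b : ℝ) (hb : b ≠ 0) (σ : ℝ≥0) (hσ : 0 < σ) (H : ℕ)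
    (v : Fin (H + 1) → Ω → ℝ)
    (hindep : iIndepFun v μ)
    (hlaw : ∀ i, Measure.map (v i) μ = gaussianReal 0 (σ ^ 2))
    (θhat : Ω → ℝ)
    (hθhat : ∀ ω, θhat ω =
      θ₀ + b⁻¹ * (v 0 ω - (1 / (H : ℝ)) * ∑ h ∈ Finset.Icc 1 H, v (h : Fin (H + 1)) ω)) :
    Measure.map
        (fun ω => (1 + 1 / (H : ℝ)) ^ (-(1 / 2 : ℝ)) * (σ : ℝ)⁻¹ * b * (θhat ω - θ₀)) μ
      = gaussianReal 0 1 := by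
  set c := (1 + 1 / (H : ℝ)) ^ (-(1 / 2 : ℝ)) * (σ : ℝ)⁻¹ with hc
  set a : Fin (H + 1) → ℝ := Fin.cons c fun _ => -(c / H)
  have hfun : (fun ω => c * b * (θhat ω - θ₀)) = fun ω => ∑ i, a i * v i ω := by
    ext ω
    rw [hθhat, Fin.sum_Icc_one_natCast_eq_sum_succ H (v · ω)]
    simp only [Fin.sum_univ_succ, a, Fin.cons_zero, Fin.cons_succ, add_sub_cancel_left, neg_mul,
      Finset.sum_neg_distrib, ← Finset.mul_sum]
    field_simp
    ring
  have hc_sq : c ^ 2 * σ ^ 2 * (1 + 1 / H) = 1 := by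
    have hx : (0 : ℝ) < 1 + 1 / H := by positivity
    rw [hc, mul_pow, Real.rpow_neg hx.le, ← Real.sqrt_eq_rpow, inv_pow, Real.sq_sqrt hx.le]
    field_simp
  have hvar : ∑ i, ‖a i‖₊ ^ 2 * σ ^ 2 = 1 := by
    rw [← NNReal.coe_inj]
    push_cast
    rw [Fin.sum_univ_succ]
    simp only [a, Fin.cons_zero, Fin.cons_succ, Real.norm_eq_abs, sq_abs, Finset.sum_const,
      Finset.card_univ, Fintype.card_fin, nsmul_eq_mul]
    rcases eq_or_ne (H : ℝ) 0 with hH | hH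
    · simpa [hH] using hc_sq
    · rw [← hc_sq]
      field_simp
  rw [hfun, hindep.map_sum_mul_eq_gaussianReal hlaw, hvar]
  simp

/-- One-dimensional exact instance of Theorem 3 / Proposition 4: for the auxiliary
estimator with affine expectation `bθ + const` and Gaussian `N(0, σ²)` parameter-free
noise `v₀, v₁, …, v_H` (independent), the just-identified indirect-inference estimator
`θ̂ = θ₀ + b⁻¹ (v₀ - (1/H) Σ_{h=1}^H v_h)` satisfies
`(1 + 1/H)^{-1/2} σ⁻¹ b (θ̂ - θ₀) ∼ N(0, 1)` exactly. -/
theorem jie_exact_normal_1d {Ω : Type*} [MeasurableSpace Ω]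
    (μ : Measure Ω) [IsProbabilityMeasure μ]
    (θ₀ b : ℝ) (hb : b ≠ 0) (σ : ℝ≥0) (hσ : 0 < σ) (H : ℕ) (hH : 1 ≤ H)
    (v : Fin (H + 1) → Ω → ℝ) (hmeas : ∀ i, Measurable (v i))
    (hindep : iIndepFun v μ)
    (hlaw : ∀ i, Measure.map (v i) μ = gaussianReal 0 (σ ^ 2))
    (θhat : Ω → ℝ)
    (hθhat : ∀ ω, θhat ω =
      θ₀ + b⁻¹ * (v 0 ω - (1 / (H : ℝ)) * ∑ h ∈ Finset.Icc 1 H, v (h : Fin (H + 1)) ω)) :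
    Measure.map
        (fun ω => (1 + 1 / (H : ℝ)) ^ (-(1 / 2 : ℝ)) * (σ : ℝ)⁻¹ * b * (θhat ω - θ₀)) μ
      = gaussianReal 0 1 :=
  jie_exact_normal_1d_general μ θ₀ b hb σ hσ H v hindep hlaw θhat hθhat
end

section
/- Let p ≥ 1, let Θ ⊆ ℝ^p be compact with θ₀ ∈ Θ, let (Ω, F, μ) be a probability space, let B be an invertible real p×p matrix, let r : ℝ^p → ℝ^p be continuous, let θ̂ : Ω → Θ be measurable, and let u : Ω → ℝ^p be Bochner-integrable with ∫ u dμ = 0. Assume that for μ-almost every ω, B·(θ̂(ω) - θ₀) + r(θ̂(ω)) - r(θ₀) = u(ω). Then θ̂ is integrable, ∫ (θ̂ - θ₀) dμ = -B⁻¹ ∫ (r(θ̂(ω)) - r(θ₀)) dμ(ω), and ‖∫ (θ̂ - θ₀) dμ‖₂ ≤ ‖B⁻¹‖_op · sup_{θ ∈ Θ} ‖r(θ) - r(θ₀)‖₂, where ‖B⁻¹‖_op is the operator norm of B⁻¹ with respect to ‖·‖₂. (The bias identity and first-order bias bound, equations (C.2)–(C.3), established in the proof of Proposition 2: the bias of the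 just-identified indirect-inference estimator is controlled by the nonlinear remainder r of the auxiliary estimator's bias.) -/
open MeasureTheory

/-! Applying `B` to `θ̂ - θ₀` and integrating the almost-sure relation kills the zero-mean noise
`u`, so `B ∫ (θ̂ - θ₀) = -∫ (r(θ̂) - r(θ₀))`; integrability of everything comes from `θ̂` taking
values in the compact set `Θ` on which `r` is bounded. Inverting `B` gives the identity, and the
bound follows from the operator norm of `B⁻¹` and `μ` being a probability measure. -/

theorem MeasureTheory.Integrable.of_mem_isCompact {Ω E : Type*} [MeasurableSpace Ω]
    {μ : Measure Ω} [IsFiniteMeasure μ] [NormedAddCommGroup E]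
    {K : Set E} (hK : IsCompact K) {f : Ω → E} (hf : AEStronglyMeasurable f μ)
    (hfK : ∀ ω, f ω ∈ K) : Integrable f μ := by
  obtain ⟨C, hC⟩ := hK.isBounded.exists_norm_le
  exact .of_bound hf C (ae_of_all _ fun ω => hC _ (hfK ω))

theorem MeasureTheory.integral_eq_neg_map_integral_of_ae_map_add_eq {Ω E F : Type*}
    [MeasurableSpace Ω] {μ : Measure Ω}
    [NormedAddCommGroup E] [NormedSpace ℝ E] [CompleteSpace E]
    [NormedAddCommGroup F] [NormedSpace ℝ F] [CompleteSpace F]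
    {T : E →L[ℝ] F} {S : F →L[ℝ] E} (hST : Function.LeftInverse S T)
    {f : Ω → E} {g u : Ω → F} (hf : Integrable f μ) (hg : Integrable g μ)
    (hu : Integrable u μ) (hu0 : ∫ ω, u ω ∂μ = 0) (heq : ∀ᵐ ω ∂μ, T (f ω) + g ω = u ω) :
    ∫ ω, f ω ∂μ = - S (∫ ω, g ω ∂μ) := by
  have hTf : T (∫ ω, f ω ∂μ) = - ∫ ω, g ω ∂μ := calc
    T (∫ ω, f ω ∂μ) = ∫ ω, (u ω - g ω) ∂μ := by
      rw [← T.integral_comp_comm hf]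
      refine integral_congr_ae ?_
      filter_upwards [heq] with ω hω
      rw [← hω, add_sub_cancel_right]
    _ = - ∫ ω, g ω ∂μ := by rw [integral_sub hu hg, hu0, zero_sub]
  rw [← hST (∫ ω, f ω ∂μ), hTf, map_neg]

theorem MeasureTheory.norm_integral_comp_le_iSup {Ω X F : Type*} [MeasurableSpace Ω]
    {μ : Measure Ω} [IsProbabilityMeasure μ] [NormedAddCommGroup F] [NormedSpace ℝ F]
    {s : Set X} {h : X → F} (hbdd : BddAbove (Set.range fun x : s => ‖h x‖))
    {f : Ω → X} (hf : ∀ ω, f ω ∈ s) :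
    ‖∫ ω, h (f ω) ∂μ‖ ≤ ⨆ x : s, ‖h x‖ := by
  simpa using norm_integral_le_of_norm_le_const (μ := μ)
    (ae_of_all _ fun ω => le_ciSup hbdd (⟨f ω, hf ω⟩ : s))

theorem Matrix.toLpLin_inv_apply_toLpLin {n R : Type*} [Fintype n] [DecidableEq n] [CommRing R]
    (p : ENNReal) {B : Matrix n n R} (hB : IsUnit B) (x : WithLp p (n → R)) :
    toLpLin p p B⁻¹ (toLpLin p p B x) = x := by
  rw [← LinearMap.comp_apply, ← toLpLin_mul_same,
    nonsing_inv_mul B ((isUnit_iff_isUnit_det B).mp hB), toLpLin_one, LinearMap.id_apply]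

theorem jie_bias_identity_and_bound_general (p : ℕ)
    (Θ : Set (EuclideanSpace ℝ (Fin p))) (hΘ : IsCompact Θ)
    (θ₀ : EuclideanSpace ℝ (Fin p))
    {Ω : Type*} [MeasurableSpace Ω] (μ : Measure Ω) [IsProbabilityMeasure μ]
    (B : Matrix (Fin p) (Fin p) ℝ) (hB : IsUnit B)
    (r : EuclideanSpace ℝ (Fin p) → EuclideanSpace ℝ (Fin p)) (hr : Continuous r)
    (θhat : Ω → EuclideanSpace ℝ (Fin p)) (hmeas : Measurable θhat)
    (hran : ∀ ω, θhat ω ∈ Θ)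
    (u : Ω → EuclideanSpace ℝ (Fin p)) (hu : Integrable u μ)
    (huzero : ∫ ω, u ω ∂μ = 0)
    (heq : ∀ᵐ ω ∂μ,
      Matrix.toEuclideanLin B (θhat ω - θ₀) + r (θhat ω) - r θ₀ = u ω) :
    Integrable θhat μ ∧
    (∫ ω, (θhat ω - θ₀) ∂μ)
      = - Matrix.toEuclideanLin B⁻¹ (∫ ω, (r (θhat ω) - r θ₀) ∂μ) ∧
    ‖∫ ω, (θhat ω - θ₀) ∂μ‖
      ≤ ‖LinearMap.toContinuousLinearMap (Matrix.toEuclideanLin B⁻¹)‖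
        * ⨆ θ : Θ, ‖r θ - r θ₀‖ := by
  set S := LinearMap.toContinuousLinearMap (Matrix.toEuclideanLin B⁻¹)
  have hθhat : Integrable θhat μ := .of_mem_isCompact hΘ hmeas.aestronglyMeasurable hran
  have hrθhat : Integrable (fun ω => r (θhat ω)) μ :=
    .of_mem_isCompact (hΘ.image hr) (hr.measurable.comp hmeas).aestronglyMeasurable
      fun ω => ⟨θhat ω, hran ω, rfl⟩
  have hident : ∫ ω, (θhat ω - θ₀) ∂μ = - S (∫ ω, (r (θhat ω) - r θ₀) ∂μ) :=
    integral_eq_neg_map_integral_of_ae_map_add_eq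
      (T := LinearMap.toContinuousLinearMap (Matrix.toEuclideanLin B)) (S := S)
      (Matrix.toLpLin_inv_apply_toLpLin 2 hB)
      (hθhat.sub (integrable_const θ₀)) (hrθhat.sub (integrable_const (r θ₀))) hu huzero
      (by simpa only [add_sub_assoc, LinearMap.coe_toContinuousLinearMap'] using heq)
  have hbdd : BddAbove (Set.range fun θ : Θ => ‖r θ - r θ₀‖) := by
    simpa only [Set.image_eq_range] using
      hΘ.bddAbove_image (f := fun θ => ‖r θ - r θ₀‖) (by fun_prop)
  refine ⟨hθhat, hident, ?_⟩
  calc ‖∫ ω, (θhat ω - θ₀) ∂μ‖ = ‖S (∫ ω, (r (θhat ω) - r θ₀) ∂μ)‖ := by rw [hident, norm_neg]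
    _ ≤ ‖S‖ * ‖∫ ω, (r (θhat ω) - r θ₀) ∂μ‖ := S.le_opNorm _
    _ ≤ ‖S‖ * ⨆ θ : Θ, ‖r θ - r θ₀‖ := by
      gcongr
      exact norm_integral_comp_le_iSup (h := fun θ => r θ - r θ₀) hbdd hran

/-- Bias identity and first-order bias bound (equations (C.2)–(C.3) in the proof of
Proposition 2): if `B(θ̂ - θ₀) + r(θ̂) - r(θ₀) = u` almost surely with `B` invertible,
`r` continuous, `θ̂` taking values in a compact set `Θ` and `u` zero-mean integrable,
then `θ̂` is integrable, `∫ (θ̂ - θ₀) dμ = -B⁻¹ ∫ (r(θ̂) - r(θ₀)) dμ`, and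
`‖∫ (θ̂ - θ₀) dμ‖₂ ≤ ‖B⁻¹‖_op · sup_{θ ∈ Θ} ‖r(θ) - r(θ₀)‖₂`. -/
theorem jie_bias_identity_and_bound (p : ℕ) (hp : 1 ≤ p)
    (Θ : Set (EuclideanSpace ℝ (Fin p))) (hΘ : IsCompact Θ)
    (θ₀ : EuclideanSpace ℝ (Fin p)) (hθ₀ : θ₀ ∈ Θ)
    {Ω : Type*} [MeasurableSpace Ω] (μ : Measure Ω) [IsProbabilityMeasure μ]
    (B : Matrix (Fin p) (Fin p) ℝ) (hB : IsUnit B)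
    (r : EuclideanSpace ℝ (Fin p) → EuclideanSpace ℝ (Fin p)) (hr : Continuous r)
    (θhat : Ω → EuclideanSpace ℝ (Fin p)) (hmeas : Measurable θhat)
    (hran : ∀ ω, θhat ω ∈ Θ)
    (u : Ω → EuclideanSpace ℝ (Fin p)) (hu : Integrable u μ)
    (huzero : ∫ ω, u ω ∂μ = 0)
    (heq : ∀ᵐ ω ∂μ,
      Matrix.toEuclideanLin B (θhat ω - θ₀) + r (θhat ω) - r θ₀ = u ω) :
    Integrable θhat μ ∧
    (∫ ω, (θhat ω - θ₀) ∂μ)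
      = - Matrix.toEuclideanLin B⁻¹ (∫ ω, (r (θhat ω) - r θ₀) ∂μ) ∧
    ‖∫ ω, (θhat ω - θ₀) ∂μ‖
      ≤ ‖LinearMap.toContinuousLinearMap (Matrix.toEuclideanLin B⁻¹)‖
        * ⨆ θ : Θ, ‖r θ - r θ₀‖ :=
  jie_bias_identity_and_bound_general p Θ hΘ θ₀ μ B hB r hr θhat hmeas hran u hu huzero heq
end

section
/- Fix p ≥ 1, a compact set Θ ⊆ ℝ^p with θ₀ ∈ Θ, and a probability space (Ω, F, μ). Let a : ℝ^p → ℝ^p be continuous and such that the binding function θ ↦ θ + a(θ) is injective on Θ. For each n ∈ ℕ, n ≥ 1, let Lₙ be a real p×p matrix and rₙ : ℝ^p → ℝ^p a function, and suppose there exist constants C > 0, β > 0, γ > 0 such that ‖Lₙ v‖₂ ≤ C n^{-β} ‖v‖₂ for all v ∈ ℝ^p and sup_{θ ∈ Θ} ‖rₙ(θ)‖₂ ≤ C n^{-γ} for all n. For each n let θ̂ₙ : Ω → Θ and eₙ : Ω → ℝ^p be measurable with, for μ-almost every ω, θ̂ₙ(ω) + a(θ̂ₙ(ω)) + Lₙ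 θ̂ₙ(ω) + rₙ(θ̂ₙ(ω)) = θ₀ + a(θ₀) + Lₙ θ₀ + rₙ(θ₀) + eₙ(ω), and suppose there exists α > 0 such that for every δ > 0 there is M > 0 with μ(‖eₙ‖₂ > M n^{-α}) ≤ δ for all n ≥ 1. Then θ̂ₙ is a consistent estimator of θ₀: for every ε > 0 and every δ > 0 there exists n* such that for all n ≥ n*, μ(‖θ̂ₙ - θ₀‖₂ ≥ ε) ≤ δ. (Fixed-dimension form of Proposition 3 / Theorem 2: consistency of the just-identified indirect-inference estimator computed by the iterative bootstrap.) -/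
open MeasureTheory Filter Topology Set

/-!
Continuity and injectivity of the binding function `θ ↦ θ + a θ` on the compact set `Θ` give
identifiability with a uniform margin: there is `η > 0` such that every `θ ∈ Θ` with
`‖θ - θ₀‖ ≥ ε` has binding value at distance at least `η` from that of `θ₀`. On the other hand
the estimating equation bounds the binding gap of `θ̂ₙ` by `C n^{-β} D + 2 C n^{-γ} + ‖eₙ‖`, where
`Θ ⊆ closedBall θ₀ D`. Once `n` is so large that `C n^{-β} D + 2 C n^{-γ} + M n^{-α} < η`, the event
`‖θ̂ₙ - θ₀‖ ≥ ε` is thus almost surely contained in `‖eₙ‖ > M n^{-α}`, whose probability is at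
most `δ` for a suitable `M`.
-/

theorem IsCompact.exists_pos_forall_dist_lt_of_dist_map_lt {X Y : Type*} [PseudoMetricSpace X]
    [MetricSpace Y] {K : Set X} {f : X → Y} (hK : IsCompact K) (hf : ContinuousOn f K)
    (hinj : InjOn f K) {x₀ : X} (hx₀ : x₀ ∈ K) {ε : ℝ} (hε : 0 < ε) :
    ∃ η > 0, ∀ x ∈ K, dist (f x) (f x₀) < η → dist x x₀ < ε := by
  set K' := K ∩ {x | ε ≤ dist x x₀}
  rcases K'.eq_empty_or_nonempty with hempty | hne
  · refine ⟨1, one_pos, fun x hx _ => ?_⟩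
    by_contra! hfar
    exact hempty.subset ⟨hx, hfar⟩
  have hK' : IsCompact K' :=
    hK.inter_right (isClosed_le continuous_const (Continuous.dist continuous_id continuous_const))
  obtain ⟨x₁, ⟨hx₁K, hx₁far⟩, hmin⟩ :=
    hK'.exists_isMinOn hne
      (continuous_dist.comp_continuousOn ((hf.mono inter_subset_left).prodMk continuousOn_const))
  have hx₁ : x₁ ≠ x₀ := by
    rintro rfl
    exact hε.not_ge (by simpa using hx₁far)
  refine ⟨dist (f x₁) (f x₀), dist_pos.2 fun h => hx₁ (hinj hx₁K hx₀ h), fun x hx hlt => ?_⟩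
  by_contra! hfar
  exact not_lt.2 (hmin ⟨hx, hfar⟩) hlt

theorem norm_sub_le_of_add_add_eq {E : Type*} [SeminormedAddCommGroup E]
    {u u' l l' s s' z : E} (h : u + l + s = u' + l' + s' + z) :
    ‖u - u'‖ ≤ ‖l' - l‖ + (‖s‖ + ‖s'‖) + ‖z‖ := by
  have hu : u - u' = (l' - l) + (s' - s) + z := by
    rw [← sub_eq_zero, ← sub_eq_zero.2 h]
    abel
  calc ‖u - u'‖ ≤ ‖l' - l‖ + ‖s' - s‖ + ‖z‖ := hu ▸ norm_add₃_le
    _ ≤ ‖l' - l‖ + (‖s‖ + ‖s'‖) + ‖z‖ := by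
      gcongr
      exact (norm_sub_le _ _).trans_eq (add_comm _ _)

theorem tendsto_natCast_rpow_neg_atTop {β : ℝ} (hβ : 0 < β) :
    Tendsto (fun n : ℕ => (n : ℝ) ^ (-β)) atTop (𝓝 0) :=
  (tendsto_rpow_neg_atTop hβ).comp tendsto_natCast_atTop_atTop

theorem jie_consistency_general (p : ℕ)
    (Θ : Set (EuclideanSpace ℝ (Fin p))) (hΘ : IsCompact Θ)
    (θ₀ : EuclideanSpace ℝ (Fin p)) (hθ₀ : θ₀ ∈ Θ)
    {Ω : Type*} [MeasurableSpace Ω] (μ : Measure Ω)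
    (a : EuclideanSpace ℝ (Fin p) → EuclideanSpace ℝ (Fin p)) (ha : Continuous a)
    (hinj : Set.InjOn (fun θ => θ + a θ) Θ)
    (L : ℕ → Matrix (Fin p) (Fin p) ℝ)
    (r : ℕ → EuclideanSpace ℝ (Fin p) → EuclideanSpace ℝ (Fin p))
    (C β γ α : ℝ) (hC : 0 < C) (hβ : 0 < β) (hγ : 0 < γ) (hα : 0 < α)
    (hL : ∀ n : ℕ, 1 ≤ n → ∀ v : EuclideanSpace ℝ (Fin p),
      ‖Matrix.toEuclideanLin (L n) v‖ ≤ C * (n : ℝ) ^ (-β) * ‖v‖)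
    (hr : ∀ n : ℕ, 1 ≤ n → ∀ θ ∈ Θ, ‖r n θ‖ ≤ C * (n : ℝ) ^ (-γ))
    (θhat : ℕ → Ω → EuclideanSpace ℝ (Fin p))
    (hran : ∀ n ω, θhat n ω ∈ Θ)
    (e : ℕ → Ω → EuclideanSpace ℝ (Fin p))
    (heq : ∀ n : ℕ, 1 ≤ n → ∀ᵐ ω ∂μ,
      θhat n ω + a (θhat n ω) + Matrix.toEuclideanLin (L n) (θhat n ω) + r n (θhat n ω)
        = θ₀ + a θ₀ + Matrix.toEuclideanLin (L n) θ₀ + r n θ₀ + e n ω)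
    (he : ∀ δ : ℝ, 0 < δ → ∃ M : ℝ, 0 < M ∧ ∀ n : ℕ, 1 ≤ n →
      μ {ω | M * (n : ℝ) ^ (-α) < ‖e n ω‖} ≤ ENNReal.ofReal δ) :
    ∀ ε : ℝ, 0 < ε → ∀ δ : ℝ, 0 < δ → ∃ nstar : ℕ, ∀ n : ℕ, nstar ≤ n →
      μ {ω | ε ≤ ‖θhat n ω - θ₀‖} ≤ ENNReal.ofReal δ := by
  intro ε hε δ hδ
  obtain ⟨η, hη, hident⟩ := hΘ.exists_pos_forall_dist_lt_of_dist_map_lt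
    (continuous_id.add ha).continuousOn hinj hθ₀ hε
  obtain ⟨D, hD⟩ := hΘ.isBounded.subset_closedBall θ₀
  obtain ⟨M, -, hM⟩ := he δ hδ
  have hrate : Tendsto (fun n : ℕ => C * (n : ℝ) ^ (-β) * D + 2 * C * (n : ℝ) ^ (-γ)
      + M * (n : ℝ) ^ (-α)) atTop (𝓝 0) := by
    simpa using ((((tendsto_natCast_rpow_neg_atTop hβ).const_mul C).mul_const D).add
      ((tendsto_natCast_rpow_neg_atTop hγ).const_mul (2 * C))).add
      ((tendsto_natCast_rpow_neg_atTop hα).const_mul M)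
  obtain ⟨N, hN⟩ :=
    ((hrate.eventually (gt_mem_nhds hη)).and (eventually_ge_atTop 1)).exists_forall_of_atTop
  refine ⟨N, fun n hn => (measure_mono_ae ?_).trans (hM n (hN n hn).2)⟩
  obtain ⟨hsmall, hn1⟩ := hN n hn
  filter_upwards [heq n hn1] with ω hω (hfar : ε ≤ ‖θhat n ω - θ₀‖)
  change M * (n : ℝ) ^ (-α) < ‖e n ω‖
  by_contra! hnoise
  set θ := θhat n ω
  have hθD : ‖θ₀ - θ‖ ≤ D := by
    simpa [dist_eq_norm, norm_sub_rev] using hD (hran n ω)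
  have hgap : ‖(θ + a θ) - (θ₀ + a θ₀)‖ < η := by
    refine ((norm_sub_le_of_add_add_eq hω).trans ?_).trans_lt hsmall
    rw [← map_sub]
    have hLθ : ‖Matrix.toEuclideanLin (L n) (θ₀ - θ)‖ ≤ C * (n : ℝ) ^ (-β) * D :=
      (hL n hn1 _).trans (by gcongr)
    linarith [hr n hn1 θ (hran n ω), hr n hn1 θ₀ hθ₀]
  exact not_lt.2 hfar (by simpa [dist_eq_norm] using hident θ (hran n ω) (by rwa [dist_eq_norm]))

/-- Fixed-dimension form of Proposition 3 / Theorem 2: consistency of the just-identified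
indirect-inference estimator. With `Θ` compact, binding function `θ + a(θ)` injective on
`Θ`, linear finite-sample bias `Lₙ` of operator norm `O(n^{-β})`, nonlinear remainder `rₙ`
uniformly `O(n^{-γ})` on `Θ`, and noise `eₙ` of order `O_p(n^{-α})`, the estimators `θ̂ₙ`
solving the indirect-inference equation are consistent for `θ₀`. -/
theorem jie_consistency (p : ℕ) (hp : 1 ≤ p)
    (Θ : Set (EuclideanSpace ℝ (Fin p))) (hΘ : IsCompact Θ)
    (θ₀ : EuclideanSpace ℝ (Fin p)) (hθ₀ : θ₀ ∈ Θ)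
    {Ω : Type*} [MeasurableSpace Ω] (μ : Measure Ω) [IsProbabilityMeasure μ]
    (a : EuclideanSpace ℝ (Fin p) → EuclideanSpace ℝ (Fin p)) (ha : Continuous a)
    (hinj : Set.InjOn (fun θ => θ + a θ) Θ)
    (L : ℕ → Matrix (Fin p) (Fin p) ℝ)
    (r : ℕ → EuclideanSpace ℝ (Fin p) → EuclideanSpace ℝ (Fin p))
    (C β γ α : ℝ) (hC : 0 < C) (hβ : 0 < β) (hγ : 0 < γ) (hα : 0 < α)
    (hL : ∀ n : ℕ, 1 ≤ n → ∀ v : EuclideanSpace ℝ (Fin p),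
      ‖Matrix.toEuclideanLin (L n) v‖ ≤ C * (n : ℝ) ^ (-β) * ‖v‖)
    (hr : ∀ n : ℕ, 1 ≤ n → ∀ θ ∈ Θ, ‖r n θ‖ ≤ C * (n : ℝ) ^ (-γ))
    (θhat : ℕ → Ω → EuclideanSpace ℝ (Fin p)) (hmeas : ∀ n, Measurable (θhat n))
    (hran : ∀ n ω, θhat n ω ∈ Θ)
    (e : ℕ → Ω → EuclideanSpace ℝ (Fin p))
    (heq : ∀ n : ℕ, 1 ≤ n → ∀ᵐ ω ∂μ,
      θhat n ω + a (θhat n ω) + Matrix.toEuclideanLin (L n) (θhat n ω) + r n (θhat n ω)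
        = θ₀ + a θ₀ + Matrix.toEuclideanLin (L n) θ₀ + r n θ₀ + e n ω)
    (he : ∀ δ : ℝ, 0 < δ → ∃ M : ℝ, 0 < M ∧ ∀ n : ℕ, 1 ≤ n →
      μ {ω | M * (n : ℝ) ^ (-α) < ‖e n ω‖} ≤ ENNReal.ofReal δ) :
    ∀ ε : ℝ, 0 < ε → ∀ δ : ℝ, 0 < δ → ∃ nstar : ℕ, ∀ n : ℕ, nstar ≤ n →
      μ {ω | ε ≤ ‖θhat n ω - θ₀‖} ≤ ENNReal.ofReal δ :=
  jie_consistency_general p Θ hΘ θ₀ hθ₀ μ a ha hinj L r C β γ α hC hβ hγ hα hL hr θhat hran e heq he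
end
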